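/- Let c ≥ 1 be an integer and let q : {0,1}^n → ℝ satisfy q̂(s) = 0 for every s with |s| > c. Let β ≥ 0 and let δ_j, δ_j' ∈ [0,1] satisfy |δ_j − δ_j'| ≤ β for all 1 ≤ j ≤ n. Then ||T^1_{δ_1} ∘ ⋯ ∘ T^n_{δ_n} q − T^1_{δ_1'} ∘ ⋯ ∘ T^n_{δ_n'} q||_1 ≤ c β · 2^n · (Σ_{s: |s| ≤ c} q̂(s)²)^{1/2}. -/

import Mathlib

/-- Dot product of two bit strings, `s·x = Σ_j s_j x_j`. -/
def dot {n : ℕ} (s x : Fin n → Bool) : ℕ :=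
  (Finset.univ.filter fun j => s j && x j).card

/-- Hamming weight `|s| = Σ_j s_j`. -/
def wt {n : ℕ} (s : Fin n → Bool) : ℕ :=
  (Finset.univ.filter fun j => s j).card

/-- Fourier coefficient `f̂(s) = 2^{-n} Σ_x f(x) (-1)^{s·x}`. -/
noncomputable def fhat {n : ℕ} (f : (Fin n → Bool) → ℝ) (s : Fin n → Bool) : ℝ :=
  (1 / 2 ^ n) * ∑ x, f x * (-1 : ℝ) ^ dot s x

/-- The single-qubit noise operator `T^j_δ`:
`(T^j_δ f)(x) = (1 - δ/2) f(x) + (δ/2) f(x ⊕ e_j)`. -/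
noncomputable def noiseT {n : ℕ} (j : Fin n) (δ : ℝ) (f : (Fin n → Bool) → ℝ) :
    (Fin n → Bool) → ℝ :=
  fun x => (1 - δ / 2) * f x + (δ / 2) * f (Function.update x j (!x j))

/-- The composed noise operator `T^1_{δ_1} ∘ ⋯ ∘ T^n_{δ_n}`. -/
noncomputable def noiseComp {n : ℕ} (δ : Fin n → ℝ) (f : (Fin n → Bool) → ℝ) :
    (Fin n → Bool) → ℝ :=
  (List.finRange n).foldr (fun j g => noiseT j (δ j) g) f

/-- The `l1` norm `‖f‖₁ = Σ_x |f(x)|`. -/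
noncomputable def l1 {n : ℕ} (f : (Fin n → Bool) → ℝ) : ℝ :=
  ∑ x, |f x|

/-!
On the Fourier side `T^j_δ` multiplies `q̂(s)` by `1 - δ` when `s_j = 1` and fixes it otherwise,
so the difference of the two noisy functions has coefficients
`(∏_{s_j = 1} (1 - δ_j) - ∏_{s_j = 1} (1 - δ'_j)) q̂(s)`. A telescoping bound on products of
factors in `[-1, 1]` makes this at most `|s| β |q̂(s)| ≤ c β |q̂(s)|`, and it vanishes for `|s| > c`.
Cauchy–Schwarz and Parseval turn this `ℓ²` bound on coefficients into the `ℓ¹` bound, at the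
cost of the factor `2^n`.
-/

open Finset Function

section Characters

variable {n : ℕ}

lemma neg_one_pow_dot (s x : Fin n → Bool) :
    (-1 : ℝ) ^ dot s x = ∏ j, if s j && x j then -1 else 1 := by
  rw [prod_ite, prod_const, prod_const, one_pow, mul_one, dot]

lemma update_not_involutive (j : Fin n) :
    Involutive fun x : Fin n → Bool => update x j (!x j) := by
  intro x
  simp

lemma neg_one_pow_dot_update_not (s x : Fin n → Bool) (j : Fin n) :
    (-1 : ℝ) ^ dot s (update x j (!x j)) = (if s j then -1 else 1) * (-1 : ℝ) ^ dot s x := by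
  rw [neg_one_pow_dot, neg_one_pow_dot, ← mul_prod_erase _ _ (mem_univ j),
    ← mul_prod_erase _ (fun k => if s k && x k then (-1 : ℝ) else 1) (mem_univ j),
    update_self]
  have hrest : ∀ k ∈ univ.erase j,
      (if s k && update x j (!x j) k then (-1 : ℝ) else 1) = if s k && x k then -1 else 1 :=
    fun k hk => by rw [update_of_ne (mem_erase.1 hk).1]
  rw [prod_congr rfl hrest]
  cases s j <;> cases x j <;> simp

lemma sum_neg_one_pow_dot_mul_neg_one_pow_dot (x y : Fin n → Bool) :
    ∑ s : Fin n → Bool, (-1 : ℝ) ^ dot s x * (-1 : ℝ) ^ dot s y = if x = y then 2 ^ n else 0 := by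
  simp_rw [neg_one_pow_dot, ← prod_mul_distrib]
  rw [← Fintype.prod_sum fun j (b : Bool) =>
    (if b && x j then (-1 : ℝ) else 1) * if b && y j then -1 else 1]
  split_ifs with hxy
  · subst hxy
    have hsq : ∀ j, ∑ b : Bool,
        (if b && x j then (-1 : ℝ) else 1) * (if b && x j then -1 else 1) = 2 := by
      intro j
      cases x j <;> norm_num
    simp only [hsq, prod_const, card_univ, Fintype.card_fin]
  · obtain ⟨j, hj⟩ : ∃ j, x j ≠ y j := not_forall.1 fun h => hxy (funext h)
    apply prod_eq_zero (mem_univ j)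
    cases hx : x j <;> cases hy : y j <;> simp_all

end Characters

section Fourier

variable {n : ℕ}

lemma fhat_sub (f g : (Fin n → Bool) → ℝ) (s : Fin n → Bool) :
    fhat (fun x => f x - g x) s = fhat f s - fhat g s := by
  simp only [fhat, ← mul_sub, ← sum_sub_distrib, sub_mul]

lemma sum_sq_eq_two_pow_mul_sum_fhat_sq (f : (Fin n → Bool) → ℝ) :
    ∑ x, f x ^ 2 = 2 ^ n * ∑ s, fhat f s ^ 2 := by
  have hexpand : ∀ s, fhat f s ^ 2 = (1 / 2 ^ n) ^ 2 *
      ∑ x, ∑ y, f x * f y * ((-1 : ℝ) ^ dot s x * (-1 : ℝ) ^ dot s y) := by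
    intro s
    rw [fhat, mul_pow, sq (∑ x, f x * (-1 : ℝ) ^ dot s x), sum_mul_sum]
    congr 1
    refine sum_congr rfl fun x _ => sum_congr rfl fun y _ => by ring
  have hcollapse : ∀ x, ∑ s : Fin n → Bool,
      ∑ y, f x * f y * ((-1 : ℝ) ^ dot s x * (-1 : ℝ) ^ dot s y) = 2 ^ n * f x ^ 2 := by
    intro x
    rw [sum_comm]
    simp_rw [← mul_sum, sum_neg_one_pow_dot_mul_neg_one_pow_dot, mul_ite, mul_zero,
      sum_ite_eq, mem_univ, if_true]
    ring
  simp_rw [hexpand, ← mul_sum]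
  rw [sum_comm, sum_congr rfl fun x _ => hcollapse x, ← mul_sum]
  field_simp

lemma l1_le_two_pow_mul_sqrt_sum_fhat_sq (f : (Fin n → Bool) → ℝ) :
    l1 f ≤ 2 ^ n * √(∑ s, fhat f s ^ 2) := by
  have hcs : l1 f ^ 2 ≤ 2 ^ n * ∑ x, f x ^ 2 := by
    simpa [l1, sq_abs, card_univ] using sq_sum_le_card_mul_sum_sq (s := univ) (f := fun x => |f x|)
  have hl1 : l1 f ≤ √((2 ^ n) ^ 2 * ∑ s, fhat f s ^ 2) := by
    refine le_trans (le_abs_self _) (Real.abs_le_sqrt ?_)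
    rw [sum_sq_eq_two_pow_mul_sum_fhat_sq] at hcs
    linarith
  rwa [Real.sqrt_mul' _ (sum_nonneg fun s _ => sq_nonneg _),
    Real.sqrt_sq (by positivity)] at hl1

end Fourier

section Noise

variable {n : ℕ}

lemma sum_update_not_mul_neg_one_pow_dot (f : (Fin n → Bool) → ℝ) (s : Fin n → Bool)
    (j : Fin n) :
    ∑ x, f (update x j (!x j)) * (-1 : ℝ) ^ dot s x
      = (if s j then -1 else 1) * ∑ x, f x * (-1 : ℝ) ^ dot s x := by
  rw [mul_sum, ← Equiv.sum_comp ((update_not_involutive j).toPerm _)]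
  refine sum_congr rfl fun x _ => ?_
  simp only [Involutive.coe_toPerm, neg_one_pow_dot_update_not, update_not_involutive j x]
  cases s j <;> ring

lemma fhat_noiseT (j : Fin n) (d : ℝ) (f : (Fin n → Bool) → ℝ) (s : Fin n → Bool) :
    fhat (noiseT j d f) s = (if s j then 1 - d else 1) * fhat f s := by
  have hsplit : ∀ x, ((1 - d / 2) * f x + d / 2 * f (update x j (!x j))) * (-1 : ℝ) ^ dot s x
      = (1 - d / 2) * (f x * (-1 : ℝ) ^ dot s x)
        + d / 2 * (f (update x j (!x j)) * (-1 : ℝ) ^ dot s x) :=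
    fun x => by ring
  simp only [fhat, noiseT]
  rw [sum_congr rfl fun x _ => hsplit x, sum_add_distrib, ← mul_sum, ← mul_sum,
    sum_update_not_mul_neg_one_pow_dot]
  cases s j <;> simp <;> ring

lemma fhat_noiseComp (δ : Fin n → ℝ) (f : (Fin n → Bool) → ℝ) (s : Fin n → Bool) :
    fhat (noiseComp δ f) s = (∏ j, if s j then 1 - δ j else 1) * fhat f s := by
  have hfold : ∀ l : List (Fin n), fhat (l.foldr (fun j g => noiseT j (δ j) g) f) s
      = (l.map fun j => if s j then 1 - δ j else 1).prod * fhat f s := by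
    intro l
    induction l with
    | nil => simp
    | cons j l ih => simp [fhat_noiseT, ih, mul_assoc]
  rw [noiseComp, hfold, Fin.prod_univ_def]

end Noise

lemma norm_prod_sub_prod_le_sum_norm_sub {ι R : Type*} [DecidableEq ι] [NormedCommRing R]
    [NormOneClass R] (A : Finset ι) (a b : ι → R) (ha : ∀ i ∈ A, ‖a i‖ ≤ 1)
    (hb : ∀ i ∈ A, ‖b i‖ ≤ 1) :
    ‖∏ i ∈ A, a i - ∏ i ∈ A, b i‖ ≤ ∑ i ∈ A, ‖a i - b i‖ := by
  induction A using Finset.induction with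
  | empty => simp
  | @insert i A hi ih =>
    rw [prod_insert hi, prod_insert hi, sum_insert hi]
    have hpa : ‖∏ k ∈ A, a k‖ ≤ 1 :=
      (Finset.norm_prod_le _ _).trans (prod_le_one (fun _ _ => norm_nonneg _)
        fun k hk => ha k (mem_insert_of_mem hk))
    have hbi : ‖b i‖ ≤ 1 := hb i (mem_insert_self i A)
    have hrest := ih (fun k hk => ha k (mem_insert_of_mem hk))
      (fun k hk => hb k (mem_insert_of_mem hk))
    calc ‖a i * ∏ k ∈ A, a k - b i * ∏ k ∈ A, b k‖
        = ‖(a i - b i) * ∏ k ∈ A, a k + b i * (∏ k ∈ A, a k - ∏ k ∈ A, b k)‖ := by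
          congr 1; ring
      _ ≤ ‖a i - b i‖ * ‖∏ k ∈ A, a k‖ + ‖b i‖ * ‖∏ k ∈ A, a k - ∏ k ∈ A, b k‖ :=
          (norm_add_le _ _).trans (add_le_add (norm_mul_le _ _) (norm_mul_le _ _))
      _ ≤ ‖a i - b i‖ * 1 + 1 * ∑ k ∈ A, ‖a k - b k‖ := by gcongr
      _ = ‖a i - b i‖ + ∑ k ∈ A, ‖a k - b k‖ := by ring

section Bound

variable {n : ℕ}

lemma abs_fhat_noiseComp_sub_le {δ δ' : Fin n → ℝ} {β : ℝ}
    (hδ : ∀ j, δ j ∈ Set.Icc (0 : ℝ) 1) (hδ' : ∀ j, δ' j ∈ Set.Icc (0 : ℝ) 1)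
    (hclose : ∀ j, |δ j - δ' j| ≤ β) (f : (Fin n → Bool) → ℝ) (s : Fin n → Bool) :
    |fhat (fun x => noiseComp δ f x - noiseComp δ' f x) s| ≤ wt s * β * |fhat f s| := by
  rw [fhat_sub, fhat_noiseComp, fhat_noiseComp, ← sub_mul, abs_mul]
  gcongr
  have hfactor : ∀ d ∈ Set.Icc (0 : ℝ) 1, ∀ b : Bool, ‖if b then 1 - d else 1‖ ≤ 1 := by
    rintro d ⟨h0, h1⟩ (_ | _)
    · simp
    · rw [if_pos rfl, Real.norm_eq_abs, abs_le]
      constructor <;> linarith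
  calc |(∏ j, if s j then 1 - δ j else 1) - ∏ j, if s j then 1 - δ' j else 1|
      ≤ ∑ j, ‖(if s j then 1 - δ j else 1) - if s j then 1 - δ' j else 1‖ :=
        norm_prod_sub_prod_le_sum_norm_sub _ _ _ (fun j _ => hfactor _ (hδ j) _)
          (fun j _ => hfactor _ (hδ' j) _)
    _ ≤ ∑ j, if s j then β else 0 := by
        gcongr with j
        cases s j
        · simp
        · simpa [abs_sub_comm] using hclose j
    _ = wt s * β := by rw [← sum_filter, sum_const, wt, nsmul_eq_mul]

lemma sum_fhat_sq_le_of_abs_fhat_le {c : ℕ} {β : ℝ} (hβ : 0 ≤ β) {f q : (Fin n → Bool) → ℝ}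
    (hq : ∀ s, c < wt s → fhat q s = 0) (hfq : ∀ s, |fhat f s| ≤ wt s * β * |fhat q s|) :
    ∑ s, fhat f s ^ 2 ≤ (c * β) ^ 2 * ∑ s ∈ univ.filter (fun s => wt s ≤ c), fhat q s ^ 2 := by
  have hhigh : ∀ s, ¬ wt s ≤ c → fhat f s = 0 := fun s hs =>
    abs_nonpos_iff.1 (by simpa [hq s (not_le.1 hs)] using hfq s)
  rw [← sum_filter_of_ne fun s _ hs => by_contra fun h => hs (by rw [hhigh s h, sq, mul_zero]),
    mul_sum]
  gcongr with s hs
  calc fhat f s ^ 2 = |fhat f s| ^ 2 := (sq_abs _).symm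
    _ ≤ (c * β * |fhat q s|) ^ 2 := by
        gcongr
        exact (hfq s).trans (by gcongr; exact_mod_cast (mem_filter.1 hs).2)
    _ = (c * β) ^ 2 * fhat q s ^ 2 := by rw [mul_pow, sq_abs]

end Bound

theorem stmt11_general {n : ℕ} (c : ℕ) (q : (Fin n → Bool) → ℝ)
    (hq : ∀ s, c < wt s → fhat q s = 0)
    (β : ℝ) (hβ : 0 ≤ β) (δ δ' : Fin n → ℝ)
    (hδ : ∀ j, δ j ∈ Set.Icc (0 : ℝ) 1) (hδ' : ∀ j, δ' j ∈ Set.Icc (0 : ℝ) 1)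
    (hclose : ∀ j, |δ j - δ' j| ≤ β) :
    l1 (fun x => noiseComp δ q x - noiseComp δ' q x)
      ≤ c * β * 2 ^ n *
        Real.sqrt (∑ s ∈ Finset.univ.filter (fun s : Fin n → Bool => wt s ≤ c),
          fhat q s ^ 2) := by
  have hS : 0 ≤ ∑ s ∈ univ.filter (fun s : Fin n → Bool => wt s ≤ c), fhat q s ^ 2 :=
    sum_nonneg fun _ _ => sq_nonneg _
  calc l1 (fun x => noiseComp δ q x - noiseComp δ' q x)
      ≤ 2 ^ n * √(∑ s, fhat (fun x => noiseComp δ q x - noiseComp δ' q x) s ^ 2) :=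
        l1_le_two_pow_mul_sqrt_sum_fhat_sq _
    _ ≤ 2 ^ n * √((c * β) ^ 2 * ∑ s ∈ univ.filter (fun s => wt s ≤ c), fhat q s ^ 2) := by
        gcongr
        exact sum_fhat_sq_le_of_abs_fhat_le hβ hq (abs_fhat_noiseComp_sub_le hδ hδ' hclose q)
    _ = _ := by
        rw [Real.sqrt_mul' _ hS, Real.sqrt_sq (by positivity)]
        ring

theorem stmt11 {n : ℕ} (c : ℕ) (hc : 1 ≤ c) (q : (Fin n → Bool) → ℝ)
    (hq : ∀ s, c < wt s → fhat q s = 0)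
    (β : ℝ) (hβ : 0 ≤ β) (δ δ' : Fin n → ℝ)
    (hδ : ∀ j, δ j ∈ Set.Icc (0 : ℝ) 1) (hδ' : ∀ j, δ' j ∈ Set.Icc (0 : ℝ) 1)
    (hclose : ∀ j, |δ j - δ' j| ≤ β) :
    l1 (fun x => noiseComp δ q x - noiseComp δ' q x)
      ≤ c * β * 2 ^ n *
        Real.sqrt (∑ s ∈ Finset.univ.filter (fun s : Fin n → Bool => wt s ≤ c),
          fhat q s ^ 2) :=
  stmt11_general c q hq β hβ δ δ' hδ hδ' hclose
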